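/- Let Λ be a finite distributive multiplicity-free lattice, and let X, Y be join irreducibles with associated simple lattice factors x, y. If X covers Y in the poset of join irreducibles of Λ (i.e., Y < X and no join irreducible lies strictly between), then Ext_Λ(x,y) ≠ 0, i.e., there is a length-two uniserial interval [u,w] with unique intermediate element v such that [u,v] is in class x and [v,w] is in class y. -/

import Mathlib

variable {α : Type*}

/-- One step of the projectivity relation on intervals: `[A ⊔ B, B] ≡ [A, A ⊓ B]`.
An interval `[X,Y]` (with `Y ≤ X`) is encoded as the pair `(X, Y)`. -/
def IntervalTranspose [Lattice α] (p q : α × α) : Prop :=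
  ∃ a b : α, p = (a ⊔ b, b) ∧ q = (a, a ⊓ b)

/-- The projectivity relation `≡` on intervals: the smallest equivalence relation
with `[A ⊔ B, B] ≡ [A, A ⊓ B]`. -/
def IntervalEquiv [Lattice α] : α × α → α × α → Prop :=
  Relation.EqvGen IntervalTranspose

/-- A lattice is multiplicity free if along any maximal chain the covering
intervals are pairwise inequivalent under the projectivity relation. -/
def MultFree (α : Type*) [Lattice α] : Prop :=
  ∀ C : Set α, IsMaxChain (· ≤ ·) C →
    ∀ a ∈ C, ∀ b ∈ C, ∀ c ∈ C, ∀ d ∈ C,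
      b ⋖ a → d ⋖ c → IntervalEquiv (a, b) (c, d) → a = c ∧ b = d

/-!
Take `u = X` and `v = X⁰`, and let `w` be the largest element below `X⁰` not above `Y`; it
exists because `Y` is join prime. Every element strictly below `X` lies below `X⁰`, so `Y ≤ X⁰`,
and the covering hypothesis forces every join irreducible below `X⁰` to be `Y` or to lie below `w`;
hence `Y ⊔ w = X⁰`, while `Y ⊓ w = Y⁰`. Distributivity turns `Y⁰ ⋖ Y` into `w ⋖ X⁰`, the
interval `[X⁰, w]` is the transpose of `[Y, Y⁰]`, and `X⁰` is the only element strictly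
between `w` and `X`.
-/

lemma intervalEquiv_sup_inf [Lattice α] (a b : α) : IntervalEquiv (a ⊔ b, b) (a, a ⊓ b) :=
  Relation.EqvGen.rel _ _ ⟨a, b, rfl, rfl⟩

lemma SupIrred.le_of_lt_of_covBy [SemilatticeSup α] {a a₀ z : α} (ha : SupIrred a) (ha₀ : a₀ ⋖ a)
    (hz : z < a) : z ≤ a₀ := by
  by_contra hza₀
  have hlt : a₀ < a₀ ⊔ z := left_lt_sup.2 hza₀
  have heq : a₀ ⊔ z = a := (sup_le ha₀.le hz.le).eq_of_not_lt (ha₀.2 hlt)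
  rcases ha.2 heq with h | h
  · exact ha₀.ne h
  · exact hz.ne h

lemma SupIrred.inf_eq_of_covBy [Lattice α] {y y₀ w : α} (hy : SupIrred y) (hy₀ : y₀ ⋖ y)
    (hy₀w : y₀ ≤ w) (hyw : ¬y ≤ w) : y ⊓ w = y₀ :=
  le_antisymm (hy.le_of_lt_of_covBy hy₀ (inf_lt_left.2 hyw)) (le_inf hy₀.le hy₀w)

lemma SupPrime.exists_isGreatest_not_le [SemilatticeSup α] [OrderBot α] [Finite α] {y : α}
    (hy : SupPrime y) (b : α) : ∃ w, IsGreatest {z | z ≤ b ∧ ¬y ≤ z} w := by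
  set s := {z | z ≤ b ∧ ¬y ≤ z}
  have hs : s.Finite := s.toFinite
  refine ⟨hs.toFinset.sup id, ⟨Finset.sup_le fun z hz => (hs.mem_toFinset.1 hz).1, ?_⟩,
    fun z hz => Finset.le_sup (f := id) (hs.mem_toFinset.2 hz)⟩
  rw [hy.le_finset_sup]
  rintro ⟨z, hz, hyz⟩
  exact (hs.mem_toFinset.1 hz).2 hyz

lemma le_of_forall_supIrred_le [SemilatticeSup α] [OrderBot α] [WellFoundedLT α] {c d : α}
    (h : ∀ b, SupIrred b → b ≤ c → b ≤ d) : c ≤ d := by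
  obtain ⟨s, rfl, hs⟩ := exists_supIrred_decomposition c
  exact Finset.sup_le fun b hb => h b (hs hb) (Finset.le_sup (f := id) hb)

theorem ext_ne_zero_of_covers_general [DistribLattice α] [Fintype α]
    {X X0 Y Y0 : α} (hX : SupIrred X) (hY : SupIrred Y) (hX0 : X0 ⋖ X) (hY0 : Y0 ⋖ Y)
    (hlt : Y < X) (hbetween : ∀ Z : α, SupIrred Z → Y < Z → Z < X → False) :
    ∃ u v w : α, v ⋖ u ∧ w ⋖ v ∧ (∀ z : α, w < z → z < u → z = v) ∧
      IntervalEquiv (u, v) (X, X0) ∧ IntervalEquiv (v, w) (Y, Y0) := by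
  have : Nonempty α := ⟨X⟩
  let := Fintype.toOrderBot α
  have hYX0 : Y ≤ X0 := hX.le_of_lt_of_covBy hX0 hlt
  obtain ⟨w, ⟨hwX0, hYw⟩, hw_max⟩ := hY.supPrime.exists_isGreatest_not_le X0
  have hinf : Y ⊓ w = Y0 :=
    hY.inf_eq_of_covBy hY0 (hw_max ⟨hY0.le.trans hYX0, hY0.lt.not_ge⟩) hYw
  have hsup : Y ⊔ w = X0 := by
    refine le_antisymm (sup_le hYX0 hwX0) (le_of_forall_supIrred_le fun b hb hbX0 => ?_)
    by_cases hYb : Y ≤ b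
    · obtain rfl | hYb := hYb.eq_or_lt
      · exact le_sup_left
      · exact (hbetween b hb hYb (hbX0.trans_lt hX0.lt)).elim
    · exact (hw_max ⟨hbX0, hYb⟩).trans le_sup_right
  have hwX0 : w ⋖ X0 := hsup ▸ covBy_sup_of_inf_covBy_left (hinf ▸ hY0)
  refine ⟨X, X0, w, hX0, hwX0, fun z hwz hzX => ?_, .refl _,
    hsup ▸ hinf ▸ intervalEquiv_sup_inf Y w⟩
  have hzX0 : z ≤ X0 := hX.le_of_lt_of_covBy hX0 hzX
  by_cases hYz : Y ≤ z
  · exact le_antisymm hzX0 (hsup ▸ sup_le hYz hwz.le)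
  · exact absurd (hw_max ⟨hzX0, hYz⟩) hwz.not_ge

/-- In a finite distributive multiplicity-free lattice, if the join irreducible `X` covers
the join irreducible `Y` in the poset of join irreducibles, then `Ext_Λ(x,y) ≠ 0`:
there is a length-two uniserial interval `[u,w]` with intermediate element `v` such that
`[u,v]` is in the class of `[X,X⁰]` and `[v,w]` in the class of `[Y,Y⁰]`. -/
theorem ext_ne_zero_of_covers [DistribLattice α] [Fintype α] (hmf : MultFree α)
    {X X0 Y Y0 : α} (hX : SupIrred X) (hY : SupIrred Y) (hX0 : X0 ⋖ X) (hY0 : Y0 ⋖ Y)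
    (hlt : Y < X) (hbetween : ∀ Z : α, SupIrred Z → Y < Z → Z < X → False) :
    ∃ u v w : α, v ⋖ u ∧ w ⋖ v ∧ (∀ z : α, w < z → z < u → z = v) ∧
      IntervalEquiv (u, v) (X, X0) ∧ IntervalEquiv (v, w) (Y, Y0) :=
  ext_ne_zero_of_covers_general hX hY hX0 hY0 hlt hbetween
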